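/- arXiv:2110.13195 — 3 statements merged into one kernel-verified Lean document; each statement's English description precedes it below -/
import Mathlib

section
/- Let α, β > 0 and δ(x,y) = max(−α(y−x), β(y−x)) on ℝ. A non-expansive mapping T : ℝ → ℝ is not firm if and only if for every ε > 0 there exist distinct x, y ∈ ℝ such that δ-distances ‖Tx − y‖ and ‖Ty − z_{xy}‖ are both less than ε·‖y − x‖, where z_{xy} is the unique point with ‖z_{xy} − y‖ = ‖y − x‖ and (y−x)(z_{xy}−y) < 0, and ‖x‖ = max(−αx, βx). -/
/-!
Putting the whole weight `q + r + s = 1 - 2t` on the largest of `δ(x,y)`, `δ(x,Tx)`, `δ(y,Ty)` is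
the best choice of weights, so `T` fails to be firm exactly when, for every `t > 0`, this single
inequality fails at some pair `x ≠ y`. On the line such a failure (say for `x < y`) forces
`Tx ≈ y` and `Ty ≈ z_{xy}` up to an error `O(t) ‖y - x‖`: the triangle inequality rules out
`Tx ≤ Ty`, and afterwards `δ(Tx,Ty) ≤ δ(x,y)` leaves no room. Conversely, when `Tx ≈ y` and
`Ty ≈ z_{xy}`, all of `δ(Tx,Ty)`, `δ(x,y)`, `δ(x,Tx)`, `δ(y,Ty)` are close to `‖y - x‖`, whereas
`δ(Tx,y) ≈ 0` and `δ(x,Ty) ≲ ‖y - x‖`, so the cross terms contribute only about `t ‖y - x‖`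
instead of `2t ‖y - x‖`. Conjugating `T` by `w ↦ -w` swaps `α` and `β` and reduces `y < x`
to `x < y`.
-/

open Filter Topology

def IsWeakMetric {X : Type*} (δ : X → X → ℝ) : Prop :=
  (∀ x, δ x x = 0) ∧ (∀ x y, 0 ≤ δ x y) ∧ (∀ x y z, δ x z ≤ δ x y + δ y z)

def IsNonexpansive {X : Type*} (δ : X → X → ℝ) (T : X → X) : Prop :=
  ∀ x y, δ (T x) (T y) ≤ δ x y

def IsFirm {X : Type*} (δ : X → X → ℝ) (T : X → X) : Prop :=
  ∃ q r s t : X → X → ℝ,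
    (∀ x y, 0 ≤ q x y) ∧ (∀ x y, 0 ≤ r x y) ∧ (∀ x y, 0 ≤ s x y) ∧ (∀ x y, 0 ≤ t x y) ∧
    (∃ α > 0, ∀ x y, α ≤ t x y) ∧
    (∀ x y, q x y + r x y + s x y + 2 * t x y ≤ 1) ∧
    (∀ x y, δ (T x) (T y) ≤ q x y * δ x y + r x y * δ x (T x) + s x y * δ y (T y)
      + t x y * (δ x (T y) + δ (T x) y))

def firmBound {X : Type*} (δ : X → X → ℝ) (T : X → X) (t : ℝ) (x y : X) : ℝ :=
  (1 - 2 * t) * max (δ x y) (max (δ x (T x)) (δ y (T y))) + t * (δ x (T y) + δ (T x) y)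

section FirmBound

variable {X : Type*} {δ : X → X → ℝ} {T : X → X}

theorem firmBound_nonneg (hδ : ∀ x y, 0 ≤ δ x y) {t : ℝ} (ht₀ : 0 ≤ t) (ht : t ≤ 1 / 2)
    (x y : X) : 0 ≤ firmBound δ T t x y :=
  add_nonneg (mul_nonneg (by linarith) (le_max_of_le_left (hδ x y)))
    (mul_nonneg ht₀ (add_nonneg (hδ _ _) (hδ _ _)))

theorem IsFirm.exists_le_firmBound (hδ : ∀ x y, 0 ≤ δ x y) (hT : IsFirm δ T) :
    ∃ t₀ > 0, ∀ x y, ∃ t, t₀ ≤ t ∧ t ≤ 1 / 2 ∧ δ (T x) (T y) ≤ firmBound δ T t x y := by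
  obtain ⟨q, r, s, t, hq, hr, hs, -, ⟨t₀, ht₀, ht₀t⟩, hsum, hle⟩ := hT
  refine ⟨t₀, ht₀, fun x y => ⟨t x y, ht₀t x y, by linarith [hq x y, hr x y, hs x y, hsum x y], ?_⟩⟩
  set M := max (δ x y) (max (δ x (T x)) (δ y (T y)))
  have hM₀ : 0 ≤ M := le_max_of_le_left (hδ x y)
  have h₁ : δ x y ≤ M := le_max_left _ _
  have h₂ : δ x (T x) ≤ M := le_max_of_le_right (le_max_left _ _)
  have h₃ : δ y (T y) ≤ M := le_max_of_le_right (le_max_right _ _)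
  calc δ (T x) (T y)
      ≤ q x y * δ x y + r x y * δ x (T x) + s x y * δ y (T y)
        + t x y * (δ x (T y) + δ (T x) y) := hle x y
    _ ≤ (q x y + r x y + s x y) * M + t x y * (δ x (T y) + δ (T x) y) := by
        nlinarith [mul_le_mul_of_nonneg_left h₁ (hq x y), mul_le_mul_of_nonneg_left h₂ (hr x y),
          mul_le_mul_of_nonneg_left h₃ (hs x y)]
    _ ≤ firmBound δ T (t x y) x y := by
        unfold firmBound
        gcongr
        linarith [hsum x y]

theorem isFirm_of_le_firmBound {t : ℝ} (ht₀ : 0 < t) (ht : t ≤ 1 / 2)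
    (h : ∀ x y, δ (T x) (T y) ≤ firmBound δ T t x y) : IsFirm δ T := by
  classical
  let M x y := max (δ x y) (max (δ x (T x)) (δ y (T y)))
  refine ⟨fun x y => if δ x y = M x y then 1 - 2 * t else 0,
    fun x y => if δ x y = M x y then 0 else if δ x (T x) = M x y then 1 - 2 * t else 0,
    fun x y => if δ x y = M x y then 0 else if δ x (T x) = M x y then 0 else 1 - 2 * t,
    fun _ _ => t, fun x y => ?_, fun x y => ?_, fun x y => ?_, fun _ _ => ht₀.le,
    ⟨t, ht₀, fun _ _ => le_rfl⟩, fun x y => ?_, fun x y => ?_⟩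
  all_goals try (dsimp only; split_ifs <;> linarith)
  have hM : δ x y = M x y ∨ δ x (T x) = M x y ∨ δ y (T y) = M x y := by
    rcases max_choice (δ x y) (max (δ x (T x)) (δ y (T y))) with h | h
    · exact Or.inl h.symm
    · rcases max_choice (δ x (T x)) (δ y (T y)) with h' | h' <;> simp only [M, h, h'] <;> tauto
  refine (h x y).trans (le_of_eq ?_)
  unfold firmBound
  dsimp only
  split_ifs with h₁ h₂
  · linear_combination (1 - 2 * t) * h₁.symm
  · linear_combination (1 - 2 * t) * h₂.symm
  · linear_combination (1 - 2 * t) * (hM.resolve_left h₁ |>.resolve_left h₂).symm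

end FirmBound

def asymNorm (α β w : ℝ) : ℝ := max (-α * w) (β * w)

def asymDist (α β x y : ℝ) : ℝ := asymNorm α β (y - x)

section AsymNorm

variable {α β : ℝ}

theorem asymNorm_nonneg (hα : 0 ≤ α) (hβ : 0 ≤ β) (w : ℝ) : 0 ≤ asymNorm α β w := by
  rcases le_total 0 w with h | h
  · exact le_max_of_le_right (mul_nonneg hβ h)
  · exact le_max_of_le_left (by nlinarith)

theorem asymNorm_of_nonneg (hα : 0 ≤ α) (hβ : 0 ≤ β) {w : ℝ} (hw : 0 ≤ w) :
    asymNorm α β w = β * w :=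
  max_eq_right (by nlinarith)

theorem asymNorm_of_nonpos (hα : 0 ≤ α) (hβ : 0 ≤ β) {w : ℝ} (hw : w ≤ 0) :
    asymNorm α β w = -α * w :=
  max_eq_left (by nlinarith)

theorem asymNorm_neg (w : ℝ) : asymNorm α β (-w) = asymNorm β α w := by
  rw [asymNorm, asymNorm, max_comm]
  ring_nf

theorem asymNorm_add_le (p q : ℝ) : asymNorm α β (p + q) ≤ asymNorm α β p + asymNorm α β q := by
  unfold asymNorm
  exact max_le (by linarith [le_max_left (-α * p) (β * p), le_max_left (-α * q) (β * q)])
    (by linarith [le_max_right (-α * p) (β * p), le_max_right (-α * q) (β * q)])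

theorem asymNorm_add_le_max_of_mul_nonpos (hα : 0 ≤ α) (hβ : 0 ≤ β) {p q : ℝ} (h : p * q ≤ 0) :
    asymNorm α β (p + q) ≤ max (asymNorm α β p) (asymNorm α β q) := by
  unfold asymNorm
  apply max_le
  · rcases le_or_gt 0 q with hq | hq
    · exact le_max_of_le_left (le_max_of_le_left (by nlinarith))
    · have hp : 0 ≤ p := by nlinarith
      exact le_max_of_le_right (le_max_of_le_left (by nlinarith))
  · rcases le_or_gt p 0 with hp | hp
    · exact le_max_of_le_right (le_max_of_le_right (by nlinarith))
    · have hq : q ≤ 0 := by nlinarith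
      exact le_max_of_le_left (le_max_of_le_right (by nlinarith))

theorem asymNorm_neg_le (hα : 0 < α) (hβ : 0 < β) (w : ℝ) :
    asymNorm α β (-w) ≤ (α / β + β / α) * asymNorm α β w := by
  rcases le_total 0 w with hw | hw
  · rw [asymNorm_of_nonpos hα.le hβ.le (neg_nonpos.mpr hw), asymNorm_of_nonneg hα.le hβ.le hw]
    have : α / β * (β * w) = α * w := by field_simp
    nlinarith [mul_nonneg (div_nonneg hβ.le hα.le) (mul_nonneg hβ.le hw)]
  · rw [asymNorm_of_nonneg hα.le hβ.le (neg_nonneg.mpr hw), asymNorm_of_nonpos hα.le hβ.le hw]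
    have : β / α * (-α * w) = β * -w := by field_simp
    nlinarith [mul_nonneg (div_nonneg hα.le hβ.le) (mul_nonneg hα.le (neg_nonneg.mpr hw))]

theorem asymDist_nonneg (hα : 0 ≤ α) (hβ : 0 ≤ β) (x y : ℝ) : 0 ≤ asymDist α β x y :=
  asymNorm_nonneg hα hβ _

theorem asymDist_self (x : ℝ) : asymDist α β x x = 0 := by
  simp [asymDist, asymNorm]

theorem asymDist_neg_neg (x y : ℝ) : asymDist β α (-x) (-y) = asymDist α β x y := by
  rw [asymDist, asymDist, ← asymNorm_neg, neg_sub_neg, neg_sub]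

end AsymNorm

/-- The witness `z` is the point `z_{xy}`; `a` and `b` stand for `Tx` and `Ty`. -/
def IsApproxReversal (α β ε x y a b : ℝ) : Prop :=
  ∃ z, asymDist α β y z = asymDist α β x y ∧ (y - x) * (z - y) < 0 ∧
    asymDist α β y a < ε * asymDist α β x y ∧ asymDist α β z b < ε * asymDist α β x y

def negConj (T : ℝ → ℝ) : ℝ → ℝ := fun w => -T (-w)

section Reversal

variable {α β : ℝ}

theorem IsApproxReversal.of_neg {ε x y a b : ℝ}
    (h : IsApproxReversal β α ε (-x) (-y) (-a) (-b)) : IsApproxReversal α β ε x y a b := by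
  obtain ⟨z, hz, hzy, ha, hb⟩ := h
  refine ⟨-z, ?_, by linarith, ?_, ?_⟩ <;>
    simp only [← asymDist_neg_neg (α := α) (β := β), neg_neg] <;> assumption

theorem firmBound_negConj (T : ℝ → ℝ) (t x y : ℝ) :
    firmBound (asymDist β α) (negConj T) t (-x) (-y) = firmBound (asymDist α β) T t x y := by
  simp only [firmBound, negConj, neg_neg, asymDist_neg_neg]

theorem IsApproxReversal.firmBound_lt (hα : 0 < α) (hβ : 0 < β) {T : ℝ → ℝ} {ε t x y : ℝ}
    (hrev : IsApproxReversal α β ε x y (T x) (T y)) (ht : t ≤ 1 / 2)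
    (hεt : 2 * (1 + (α / β + β / α)) * ε ≤ t) :
    firmBound (asymDist α β) T t x y < asymDist α β (T x) (T y) := by
  obtain ⟨z, hz, hzy, ha, hb⟩ := hrev
  unfold asymDist at *
  set κ := α / β + β / α
  set D := asymNorm α β (y - x)
  have hN := asymNorm_nonneg hα.le hβ.le
  have hκ : 0 ≤ κ := by positivity
  have hε : 0 < ε := pos_of_mul_pos_left ((hN _).trans_lt ha) (hN _)
  have ht₀ : 0 ≤ t := le_trans (by positivity) hεt
  have hM : max D (max (asymNorm α β (T x - x)) (asymNorm α β (T y - y))) ≤ D + ε * D := by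
    have h₁ := asymNorm_add_le (α := α) (β := β) (T x - y) (y - x)
    have h₂ := asymNorm_add_le (α := α) (β := β) (T y - z) (z - y)
    simp only [sub_add_sub_cancel] at h₁ h₂
    exact max_le (by nlinarith [hN (T x - y)]) (max_le (by linarith) (by linarith))
  have hcross₁ : asymNorm α β (T y - x) ≤ ε * D + D := by
    have h₁ := asymNorm_add_le (α := α) (β := β) (T y - z) (z - x)
    have h₂ := asymNorm_add_le_max_of_mul_nonpos hα.le hβ.le (p := z - y) (q := y - x)
      (by nlinarith)
    simp only [sub_add_sub_cancel, hz, max_self, show asymNorm α β (y - x) = D from rfl] at h₁ h₂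
    linarith
  have hcross₂ : asymNorm α β (y - T x) ≤ κ * (ε * D) := by
    have h := asymNorm_neg_le hα hβ (T x - y)
    rw [neg_sub] at h
    nlinarith
  have hlower : D - (1 + κ) * (ε * D) < asymNorm α β (T y - T x) := by
    have h₁ := asymNorm_add_le (α := α) (β := β) (z - T y) (T y - y)
    have h₂ := asymNorm_add_le (α := α) (β := β) (T y - T x) (T x - y)
    have h₃ := asymNorm_neg_le hα hβ (T y - z)
    simp only [sub_add_sub_cancel, neg_sub, hz] at h₁ h₂ h₃
    nlinarith
  have hD : 0 ≤ D := hN _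
  calc firmBound _ T t x y
      ≤ (1 - 2 * t) * (D + ε * D) + t * ((ε * D + D) + κ * (ε * D)) := by
        unfold firmBound
        gcongr
        linarith
    _ ≤ D - (1 + κ) * (ε * D) := by
        nlinarith [mul_le_mul_of_nonneg_right hεt hD, mul_nonneg ht₀ (mul_nonneg hε.le hD),
          mul_le_mul_of_nonneg_right (by linarith : t ≤ 1) (mul_nonneg hκ (mul_nonneg hε.le hD))]
    _ < _ := hlower

theorem isApproxReversal_of_lt_of_firmBound_lt (hα : 0 < α) (hβ : 0 < β) {T : ℝ → ℝ}
    {ε t x y : ℝ} (hxy : x < y) (ht₀ : 0 ≤ t) (ht : t ≤ 1 / 4) (hεt : 4 * (1 + β / α) * t ≤ ε)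
    (hT : asymDist α β (T x) (T y) ≤ asymDist α β x y)
    (hlt : firmBound (asymDist α β) T t x y < asymDist α β (T x) (T y)) :
    IsApproxReversal α β ε x y (T x) (T y) := by
  unfold firmBound at hlt
  unfold asymDist at hT hlt
  unfold IsApproxReversal asymDist
  set a := T x
  set b := T y
  set u := y - x
  have hu : 0 < u := sub_pos.mpr hxy
  have hN := asymNorm_nonneg hα.le hβ.le
  have hD : asymNorm α β u = β * u := asymNorm_of_nonneg hα.le hβ.le hu.le
  obtain ⟨M, hM⟩ : ∃ M,
      max (asymNorm α β u) (max (asymNorm α β (a - x)) (asymNorm α β (b - y))) = M := ⟨_, rfl⟩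
  rw [hM] at hlt
  rw [hD] at hM hT ⊢
  have hMu : β * u ≤ M := hM ▸ le_max_left _ _
  have hMa : β * (a - x) ≤ M :=
    hM ▸ le_max_of_le_right (le_max_of_le_left (le_max_right _ _))
  have hMb : -α * (b - y) ≤ M :=
    hM ▸ le_max_of_le_right (le_max_of_le_right (le_max_left _ _))
  have hcross : asymNorm α β (b - a + u) ≤ asymNorm α β (b - x) + asymNorm α β (y - a) := by
    simpa only [u, show b - x + (y - a) = b - a + (y - x) by ring]
      using asymNorm_add_le (b - x) (y - a)
  have hba : b < a := by
    by_contra! hab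
    rw [asymNorm_of_nonneg hα.le hβ.le (by linarith : 0 ≤ b - a + u)] at hcross
    rw [asymNorm_of_nonneg hα.le hβ.le (sub_nonneg.mpr hab)] at hlt hT
    nlinarith [mul_le_mul_of_nonneg_left hMu (by linarith : (0 : ℝ) ≤ 1 - 2 * t),
      mul_le_mul_of_nonneg_left hcross ht₀,
      mul_le_mul_of_nonneg_left hT (by linarith : (0 : ℝ) ≤ 1 - t)]
  rw [asymNorm_of_nonpos hα.le hβ.le (sub_nonpos.mpr hba.le)] at hlt hT
  have hgap : (1 - 2 * t) * M < -α * (b - a) := by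
    nlinarith [mul_nonneg ht₀ (add_nonneg (hN (b - x)) (hN (y - a)))]
  have hM₀ : 0 ≤ M := (mul_pos hβ hu).le.trans hMu
  have hM2 : 2 * t * M ≤ 4 * t * (β * u) := by
    nlinarith [mul_nonneg ht₀ hM₀, mul_le_mul_of_nonneg_left ht hM₀]
  have hε : 4 * t * (β * u) ≤ ε * (β * u) :=
    mul_le_mul_of_nonneg_right (by nlinarith [div_nonneg hβ.le hα.le])
      (mul_pos hβ hu).le
  have hz : y - β / α * u - y = -(β / α * u) := by ring
  have hαz : α * (β / α * u) = β * u := by field_simp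
  refine ⟨y - β / α * u, ?_, ?_, ?_, ?_⟩
  · rw [hz, asymNorm_neg, asymNorm_of_nonneg hβ.le hα.le (by positivity), hαz]
  · rw [hz]
    nlinarith [mul_pos (div_pos hβ hα) (mul_pos hu hu)]
  · exact max_lt (by linarith) (by linarith)
  · refine max_lt (by linarith) ?_
    have h₁ : β / α * (β * u + α * (b - a)) ≤ β / α * (2 * t * M) :=
      mul_le_mul_of_nonneg_left (by linarith) (by positivity)
    have h₂ : β / α * (α * (b - a)) = β * (b - a) := by field_simp
    have h₃ : β / α * (2 * t * M) ≤ β / α * (4 * t * (β * u)) :=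
      mul_le_mul_of_nonneg_left hM2 (by positivity)
    have h₄ := mul_le_mul_of_nonneg_right hεt (mul_pos hβ hu).le
    nlinarith

theorem isApproxReversal_of_firmBound_lt (hα : 0 < α) (hβ : 0 < β) {T : ℝ → ℝ}
    {ε t x y : ℝ} (hxy : x ≠ y) (ht₀ : 0 ≤ t) (ht : t ≤ 1 / 4)
    (hεt : 4 * (1 + (α / β + β / α)) * t ≤ ε)
    (hT : asymDist α β (T x) (T y) ≤ asymDist α β x y)
    (hlt : firmBound (asymDist α β) T t x y < asymDist α β (T x) (T y)) :
    IsApproxReversal α β ε x y (T x) (T y) := by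
  rcases hxy.lt_or_gt with h | h
  · refine isApproxReversal_of_lt_of_firmBound_lt hα hβ h ht₀ ht ?_ hT hlt
    nlinarith [div_nonneg hα.le hβ.le]
  · have hεt' : 4 * (1 + α / β) * t ≤ ε := by nlinarith [div_nonneg hβ.le hα.le]
    have hT' : asymDist β α (negConj T (-x)) (negConj T (-y)) ≤ asymDist β α (-x) (-y) := by
      simpa only [negConj, neg_neg, asymDist_neg_neg] using hT
    have hlt' : firmBound (asymDist β α) (negConj T) t (-x) (-y)
        < asymDist β α (negConj T (-x)) (negConj T (-y)) := by
      simpa only [firmBound_negConj, negConj, neg_neg, asymDist_neg_neg] using hlt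
    have := isApproxReversal_of_lt_of_firmBound_lt hβ hα (neg_lt_neg h) ht₀ ht hεt' hT' hlt'
    simp only [negConj, neg_neg] at this
    exact this.of_neg

end Reversal

theorem stmt16 (α β : ℝ) (hα : 0 < α) (hβ : 0 < β) (T : ℝ → ℝ)
    (N : ℝ → ℝ) (hN : ∀ z : ℝ, N z = max (-α * z) (β * z))
    (hT : IsNonexpansive (fun x y : ℝ => N (y - x)) T) :
    ¬ IsFirm (fun x y : ℝ => N (y - x)) T ↔
      ∀ ε > (0 : ℝ), ∃ x y z : ℝ, x ≠ y ∧
        N (z - y) = N (y - x) ∧ (y - x) * (z - y) < 0 ∧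
        N (T x - y) < ε * N (y - x) ∧ N (T y - z) < ε * N (y - x) := by
  obtain rfl : N = asymNorm α β := funext hN
  constructor
  · intro hnotFirm ε hε
    by_contra hnoRev
    set t := min (1 / 4) (ε / (4 * (1 + (α / β + β / α))))
    have ht₀ : 0 < t := lt_min (by norm_num) (by positivity)
    have ht : t ≤ 1 / 4 := min_le_left _ _
    have hεt : 4 * (1 + (α / β + β / α)) * t ≤ ε := by
      rw [← le_div_iff₀' (by positivity)]
      exact min_le_right _ _
    refine hnotFirm (isFirm_of_le_firmBound ht₀ (by linarith) fun x y => ?_)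
    rcases eq_or_ne x y with rfl | hxy
    · change asymDist α β (T x) (T x) ≤ firmBound (asymDist α β) T t x x
      rw [asymDist_self]
      exact firmBound_nonneg (asymDist_nonneg hα.le hβ.le) ht₀.le (by linarith) x x
    · by_contra! hlt
      obtain ⟨z, hz⟩ := isApproxReversal_of_firmBound_lt hα hβ hxy ht₀.le ht hεt (hT x y) hlt
      exact hnoRev ⟨x, y, z, hxy, hz⟩
  · rintro hrev hfirm
    obtain ⟨t₀, ht₀, hbound⟩ := hfirm.exists_le_firmBound (asymDist_nonneg hα.le hβ.le)
    obtain ⟨x, y, z, -, hz⟩ := hrev (t₀ / (2 * (1 + (α / β + β / α)))) (by positivity)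
    obtain ⟨t, ht₀t, ht, hle⟩ := hbound x y
    have hεt : 2 * (1 + (α / β + β / α)) * (t₀ / (2 * (1 + (α / β + β / α)))) ≤ t := by
      rwa [mul_div_cancel₀ _ (by positivity)]
    exact (hle.trans_lt (IsApproxReversal.firmBound_lt hα hβ ⟨z, hz⟩ ht hεt)).false
end

section
/- Let T be a firm non-expansive mapping of a metric space (X,δ) into itself with linear rate of escape ρ(T) = 0. Then there exists a metric functional h on X such that h(Tx) ≤ h(x) for every x ∈ X. -/
open Filter Topology

/-!
Along an orbit the distances `δ(Tⁿx, Tⁿ⁺ᵏx)` decrease in `n` to limits `b k`. Firmness applied to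
`Tⁿx` and `Tⁿ⁺ᵏ⁺¹x` passes to the limit and makes `k ↦ b k` convex as long as `b 1 ≤ b (k + 1)`;
by induction `b (k + 1) - b k ≥ b 1`, so `k * b 1 ≤ b k ≤ δ(x, Tᵏx)` and zero escape rate forces
`b 1 = 0`: the orbit of `x₀` consists of approximate fixed points.

For any `y`, non-expansiveness gives the metric functional `h = δ(·, Ty) - δ(x₀, Ty)` the bound
`h (T x) ≤ h x + δ(y, Ty)`. The metric functionals form a compact subset of `ℝ^X`, so the
nested closed sets of those with `h ∘ T ≤ h + 1/(n+1)` have a common point.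
-/

open Function

section Orbit

variable {X : Type*} [PseudoMetricSpace X] {T : X → X}

lemma IsNonexpansive.antitone_dist_iterate (hT : IsNonexpansive dist T) (x : X) (k : ℕ) :
    Antitone fun n => dist (T^[n] x) (T^[n + k] x) :=
  antitone_nat_of_succ_le fun n => by
    rw [Nat.add_right_comm, iterate_succ_apply', iterate_succ_apply']
    exact hT _ _

noncomputable def asymptoticDist (T : X → X) (x : X) (k : ℕ) : ℝ :=
  ⨅ n, dist (T^[n] x) (T^[n + k] x)

lemma bddBelow_range_dist_iterate (T : X → X) (x : X) (k : ℕ) :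
    BddBelow (Set.range fun n => dist (T^[n] x) (T^[n + k] x)) :=
  ⟨0, by rintro _ ⟨n, rfl⟩; exact dist_nonneg⟩

lemma asymptoticDist_nonneg (T : X → X) (x : X) (k : ℕ) : 0 ≤ asymptoticDist T x k :=
  Real.iInf_nonneg fun _ => dist_nonneg

lemma asymptoticDist_le (T : X → X) (x : X) (k n : ℕ) :
    asymptoticDist T x k ≤ dist (T^[n] x) (T^[n + k] x) :=
  ciInf_le (bddBelow_range_dist_iterate T x k) n

@[simp]
lemma asymptoticDist_zero (T : X → X) (x : X) : asymptoticDist T x 0 = 0 := by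
  simp [asymptoticDist]

lemma IsNonexpansive.tendsto_asymptoticDist (hT : IsNonexpansive dist T) (x : X) (k : ℕ) :
    Tendsto (fun n => dist (T^[n] x) (T^[n + k] x)) atTop (𝓝 (asymptoticDist T x k)) :=
  tendsto_atTop_ciInf (hT.antitone_dist_iterate x k) (bddBelow_range_dist_iterate T x k)

lemma IsFirm.exists_forall_dist_iterate_le (hF : IsFirm dist T) :
    ∃ α > 0, ∀ x N k, ∃ Q R S τ : ℝ,
      0 ≤ Q ∧ 0 ≤ R ∧ 0 ≤ S ∧ α ≤ τ ∧ Q + R + S + 2 * τ ≤ 1 ∧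
      dist (T^[N + 1] x) (T^[N + 1 + (k + 1)] x) ≤ Q * dist (T^[N] x) (T^[N + (k + 1)] x)
        + R * dist (T^[N] x) (T^[N + 1] x) + S * dist (T^[N + (k + 1)] x) (T^[N + (k + 1) + 1] x)
        + τ * (dist (T^[N] x) (T^[N + (k + 2)] x) + dist (T^[N + 1] x) (T^[N + 1 + k] x)) := by
  obtain ⟨q, r, s, t, hq, hr, hs, -, ⟨α, hα, hαt⟩, hsum, hfirm⟩ := hF
  refine ⟨α, hα, fun x N k => ?_⟩
  set y := T^[N] x
  set z := T^[N + (k + 1)] x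
  refine ⟨q y z, r y z, s y z, t y z, hq y z, hr y z, hs y z, hαt y z, hsum y z, ?_⟩
  simp only [show N + 1 + (k + 1) = N + (k + 1) + 1 by omega,
    show N + (k + 2) = N + (k + 1) + 1 by omega, show N + 1 + k = N + (k + 1) by omega,
    iterate_succ_apply']
  exact hfirm y z

lemma IsFirm.asymptoticDist_convex (hT : IsNonexpansive dist T) (hF : IsFirm dist T) (x : X)
    {k : ℕ} (hk : asymptoticDist T x 1 ≤ asymptoticDist T x (k + 1)) :
    2 * asymptoticDist T x (k + 1) ≤ asymptoticDist T x k + asymptoticDist T x (k + 2) := by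
  obtain ⟨α, hα, hfirm⟩ := hF.exists_forall_dist_iterate_le
  set b := asymptoticDist T x
  set d : ℕ → ℕ → ℝ := fun n j => dist (T^[n] x) (T^[n + j] x)
  have hdb : ∀ n j, b j ≤ d n j := fun n j => asymptoticDist_le T x j n
  have herr : ∀ j m, Tendsto (fun N => d (N + m) j - b j) atTop (𝓝 0) := fun j m =>
    tendsto_sub_nhds_zero_iff.2 ((hT.tendsto_asymptoticDist x j).comp (tendsto_add_atTop_nat m))
  set e : ℕ → ℝ := fun N => (d N (k + 1) - b (k + 1)) + (d N 1 - b 1)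
    + (d (N + (k + 1)) 1 - b 1) + (d N (k + 2) - b (k + 2)) + (d (N + 1) k - b k)
  have he : Tendsto e atTop (𝓝 0) := by
    simpa only [add_zero] using
      ((((herr (k + 1) 0).add (herr 1 0)).add (herr 1 (k + 1))).add (herr (k + 2) 0)).add
        (herr k 1)
  by_contra! hΔ
  have hbound : ∀ N, α * (2 * b (k + 1) - b k - b (k + 2)) ≤ e N := by
    intro N
    obtain ⟨Q, R, S, τ, hQ, hR, hS, hατ, hsum, key⟩ := hfirm x N k
    have hτ : 0 ≤ τ := hα.le.trans hατ
    have hΔ' : 0 ≤ 2 * b (k + 1) - b k - b (k + 2) := by linarith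
    -- Trade each `d` for `b` plus its error, then use `Q ≤ 1 - R - S - 2τ` and `b 1 ≤ b (k + 1)`.
    linarith [hdb (N + 1) (k + 1),
      mul_le_of_le_one_left (sub_nonneg.2 (hdb N (k + 1))) (show Q ≤ 1 by linarith),
      mul_le_of_le_one_left (sub_nonneg.2 (hdb N 1)) (show R ≤ 1 by linarith),
      mul_le_of_le_one_left (sub_nonneg.2 (hdb (N + (k + 1)) 1)) (show S ≤ 1 by linarith),
      mul_le_of_le_one_left (sub_nonneg.2 (hdb N (k + 2))) (show τ ≤ 1 by linarith),
      mul_le_of_le_one_left (sub_nonneg.2 (hdb (N + 1) k)) (show τ ≤ 1 by linarith),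
      mul_nonneg (show 0 ≤ 1 - Q - R - S - 2 * τ by linarith) (asymptoticDist_nonneg T x (k + 1)),
      mul_nonneg (add_nonneg hR hS) (sub_nonneg.2 hk), mul_le_mul_of_nonneg_right hατ hΔ']
  exact (mul_pos hα (by linarith)).not_ge (ge_of_tendsto' he hbound)

lemma IsFirm.asymptoticDist_one_le_sub (hT : IsNonexpansive dist T) (hF : IsFirm dist T)
    (x : X) (k : ℕ) :
    asymptoticDist T x 1 ≤ asymptoticDist T x (k + 1) - asymptoticDist T x k := by
  induction k with
  | zero => simp
  | succ k ih =>
    have hk : asymptoticDist T x 1 ≤ asymptoticDist T x (k + 1) := by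
      linarith [asymptoticDist_nonneg T x k]
    linarith [hF.asymptoticDist_convex hT x hk]

lemma IsFirm.nat_mul_asymptoticDist_one_le (hT : IsNonexpansive dist T) (hF : IsFirm dist T)
    (x : X) (k : ℕ) : k * asymptoticDist T x 1 ≤ asymptoticDist T x k := by
  induction k with
  | zero => simp
  | succ k ih =>
    push_cast
    linarith [hF.asymptoticDist_one_le_sub hT x k]

lemma IsFirm.asymptoticDist_one_eq_zero (hT : IsNonexpansive dist T) (hF : IsFirm dist T) {x : X}
    (hρ : Tendsto (fun n : ℕ => dist x (T^[n] x) / n) atTop (𝓝 0)) :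
    asymptoticDist T x 1 = 0 := by
  refine le_antisymm (ge_of_tendsto hρ ?_) (asymptoticDist_nonneg T x 1)
  filter_upwards [eventually_gt_atTop 0] with k hk
  rw [le_div_iff₀ (by exact_mod_cast hk), mul_comm]
  simpa using (hF.nat_mul_asymptoticDist_one_le hT x k).trans (asymptoticDist_le T x k 0)

theorem IsFirm.tendsto_dist_iterate_succ (hT : IsNonexpansive dist T) (hF : IsFirm dist T)
    {x : X} (hρ : Tendsto (fun n : ℕ => dist x (T^[n] x) / n) atTop (𝓝 0)) :
    Tendsto (fun n => dist (T^[n] x) (T^[n + 1] x)) atTop (𝓝 0) :=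
  hF.asymptoticDist_one_eq_zero hT hρ ▸ hT.tendsto_asymptoticDist x 1

end Orbit

lemma isClosed_setOf_forall_apply_le_add {X : Type*} (T : X → X) (c : ℝ) :
    IsClosed {h : X → ℝ | ∀ x, h (T x) ≤ h x + c} := by
  simp only [Set.ofPred_forall]
  exact isClosed_iInter fun x =>
    isClosed_le (continuous_apply (T x)) ((continuous_apply x).add continuous_const)

section MetricFunctional

variable {X : Type*} [PseudoMetricSpace X]

lemma isCompact_closure_setOf_dist_sub_dist (x₀ : X) :
    IsCompact (closure {f : X → ℝ | ∃ w : X, f = fun x => dist x w - dist x₀ w}) := by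
  refine (isCompact_univ_pi fun x => isCompact_Icc (a := -dist x x₀) (b := dist x x₀))
    |>.of_isClosed_subset isClosed_closure
      (closure_minimal ?_ (isClosed_set_pi fun _ _ => isClosed_Icc))
  rintro _ ⟨w, rfl⟩ x -
  exact abs_le.1 (abs_dist_sub_le x x₀ w)

lemma IsNonexpansive.dist_sub_dist_apply_le {T : X → X} (hT : IsNonexpansive dist T)
    (x₀ x y : X) :
    dist (T x) (T y) - dist x₀ (T y) ≤ dist x (T y) - dist x₀ (T y) + dist y (T y) := by
  linarith [hT x y, dist_triangle x (T y) y, dist_comm y (T y)]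

theorem IsNonexpansive.exists_mem_closure_apply_le {T : X → X} (hT : IsNonexpansive dist T)
    (x₀ : X) (happrox : ∀ ε > 0, ∃ y, dist y (T y) < ε) :
    ∃ h ∈ closure {f : X → ℝ | ∃ w : X, f = fun x => dist x w - dist x₀ w},
      ∀ x, h (T x) ≤ h x := by
  set K := closure {f : X → ℝ | ∃ w : X, f = fun x => dist x w - dist x₀ w}
  set W : ℕ → Set (X → ℝ) := fun n => K ∩ {h | ∀ x, h (T x) ≤ h x + 1 / (n + 1)}
  have hW_closed (n : ℕ) : IsClosed (W n) :=
    isClosed_closure.inter (isClosed_setOf_forall_apply_le_add T _)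
  have hW_anti (n : ℕ) : W (n + 1) ⊆ W n := fun h ⟨hK, hh⟩ => ⟨hK, fun x =>
    (hh x).trans (by gcongr; linarith)⟩
  have hW_nonempty (n : ℕ) : (W n).Nonempty := by
    obtain ⟨y, hy⟩ := happrox (1 / (n + 1)) Nat.one_div_pos_of_nat
    exact ⟨_, subset_closure ⟨T y, rfl⟩, fun x =>
      (hT.dist_sub_dist_apply_le x₀ x y).trans (by linarith)⟩
  obtain ⟨h, hh⟩ := IsCompact.nonempty_iInter_of_sequence_nonempty_isCompact_isClosed W hW_anti
    hW_nonempty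
    ((isCompact_closure_setOf_dist_sub_dist x₀).of_isClosed_subset (hW_closed 0)
      Set.inter_subset_left) hW_closed
  simp only [Set.mem_iInter] at hh
  refine ⟨h, (hh 0).1, fun x => ?_⟩
  have hlim : Tendsto (fun n : ℕ => h x + 1 / ((n : ℝ) + 1)) atTop (𝓝 (h x)) := by
    simpa using tendsto_one_div_add_atTop_nhds_zero_nat.const_add (h x)
  exact ge_of_tendsto' hlim fun n => (hh n).2 x

end MetricFunctional

theorem stmt18 {X : Type*} [MetricSpace X] (x₀ : X) (T : X → X)
    (hT : IsNonexpansive (fun x y : X => dist x y) T)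
    (hF : IsFirm (fun x y : X => dist x y) T)
    (hρ : Tendsto (fun n : ℕ => dist x₀ (T^[n] x₀) / n) atTop (nhds 0)) :
    ∃ h : X → ℝ,
      h ∈ closure {f : X → ℝ | ∃ w : X, f = fun x => dist x w - dist x₀ w} ∧
      ∀ x : X, h (T x) ≤ h x := by
  refine hT.exists_mem_closure_apply_le x₀ fun ε hε => ?_
  obtain ⟨n, hn⟩ := ((tendsto_order.1 (hF.tendsto_dist_iterate_succ hT hρ)).2 ε hε).exists
  exact ⟨T^[n] x₀, by rwa [← iterate_succ_apply' T]⟩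
end

section
/- Let T be a firm non-expansive mapping of a metric space (X,δ) into itself, and suppose h is a metric functional that arises as a pointwise limit of h_{T^{n_i}x₀} along a subsequence n_i → ∞. Then for every x ∈ X, h(Tx) ≤ h(x) + ρ(T), where ρ(T) is the linear rate of escape. -/
open Filter Topology

/-!
Along the orbit `xₖ = Tᵏx` of a nonexpansive map, `d(xₖ, xₖ₊ₘ)` decreases in `k` to a limit
`B m ≤ m L`, where `L = B 1` is the limit of the step lengths. Firmness at the pair
`(xₖ, xₖ₊ₘ₊₁)` turns `B (m + 1) = (m + 1) L` into `B (m + 2) ≥ (m + 2) L`, so `B m = m L` for all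
`m`, and `d(x, xₘ) ≥ B m` gives `L ≤ ρ`. Finally `d(Ty, xₙ) ≤ d(y, xₙ₋₁) ≤ d(y, xₙ) + d(xₙ₋₁, xₙ)`,
and passing to the limit along `nᵢ` gives `h (T y) ≤ h y + L ≤ h y + ρ`.
-/

section

variable {X : Type*} [PseudoMetricSpace X] {T : X → X}

def orbitDist (T : X → X) (x : X) (m k : ℕ) : ℝ := dist (T^[k] x) (T^[k + m] x)

noncomputable def orbitDistInf (T : X → X) (x : X) (m : ℕ) : ℝ := ⨅ k, orbitDist T x m k

theorem orbitDist_nonneg (x : X) (m k : ℕ) : 0 ≤ orbitDist T x m k := dist_nonneg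

theorem bddBelow_range_orbitDist (x : X) (m : ℕ) : BddBelow (Set.range (orbitDist T x m)) :=
  ⟨0, by rintro _ ⟨k, rfl⟩; exact orbitDist_nonneg x m k⟩

theorem orbitDistInf_le (x : X) (m k : ℕ) : orbitDistInf T x m ≤ orbitDist T x m k :=
  ciInf_le (bddBelow_range_orbitDist x m) k

theorem orbitDistInf_nonneg (x : X) (m : ℕ) : 0 ≤ orbitDistInf T x m :=
  le_ciInf (orbitDist_nonneg x m)

theorem orbitDist_antitone (hT : IsNonexpansive dist T) (x : X) (m : ℕ) :
    Antitone (orbitDist T x m) := by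
  refine antitone_nat_of_succ_le fun k => ?_
  simp only [orbitDist, Nat.succ_add, Function.iterate_succ_apply']
  exact hT _ _

theorem tendsto_orbitDist (hT : IsNonexpansive dist T) (x : X) (m : ℕ) :
    Tendsto (orbitDist T x m) atTop (𝓝 (orbitDistInf T x m)) :=
  tendsto_atTop_ciInf (orbitDist_antitone hT x m) (bddBelow_range_orbitDist x m)

theorem orbitDist_le_mul (hT : IsNonexpansive dist T) (x : X) (m k : ℕ) :
    orbitDist T x m k ≤ m * orbitDist T x 1 k := by
  induction m with
  | zero => simp [orbitDist]
  | succ m ih =>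
    have htri : orbitDist T x (m + 1) k ≤ orbitDist T x m k + orbitDist T x 1 (k + m) := by
      simpa only [orbitDist, ← add_assoc] using dist_triangle _ (T^[k + m] x) _
    have hstep := orbitDist_antitone hT x 1 (Nat.le_add_right k m)
    push_cast
    linarith

theorem orbitDistInf_le_mul (hT : IsNonexpansive dist T) (x : X) (m : ℕ) :
    orbitDistInf T x m ≤ m * orbitDistInf T x 1 :=
  ge_of_tendsto' ((tendsto_orbitDist hT x 1).const_mul (m : ℝ)) fun k =>
    (orbitDistInf_le x m k).trans (orbitDist_le_mul hT x m k)

theorem IsFirm.exists_orbitDist_le (hF : IsFirm dist T) (x : X) (m : ℕ) :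
    ∃ α > 0, ∀ k, ∃ q r s t : ℝ, 0 ≤ q ∧ 0 ≤ r ∧ 0 ≤ s ∧ α ≤ t ∧ q + r + s + 2 * t ≤ 1 ∧
      orbitDist T x (m + 1) (k + 1) ≤ q * orbitDist T x (m + 1) k + r * orbitDist T x 1 k
        + s * orbitDist T x 1 (k + (m + 1))
        + t * (orbitDist T x (m + 2) k + orbitDist T x m (k + 1)) := by
  obtain ⟨q, r, s, t, hq, hr, hs, -, ⟨α, hα, hαt⟩, hsum, hfirm⟩ := hF
  refine ⟨α, hα, fun k => ?_⟩
  let y := T^[k] x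
  let z := T^[k + (m + 1)] x
  refine ⟨q y z, r y z, s y z, t y z, hq y z, hr y z, hs y z, hαt y z, hsum y z, ?_⟩
  have e₁ : k + 1 + (m + 1) = k + (m + 1) + 1 := by omega
  have e₂ : k + (m + 2) = k + (m + 1) + 1 := by omega
  have e₃ : k + 1 + m = k + (m + 1) := by omega
  simp only [orbitDist, e₁, e₂, e₃, Function.iterate_succ_apply']
  exact hfirm y z

theorem IsFirm.mul_le_orbitDistInf_add_two (hT : IsNonexpansive dist T) (hF : IsFirm dist T)
    (x : X) {m : ℕ} (hm : orbitDistInf T x (m + 1) = (m + 1) * orbitDistInf T x 1) :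
    (m + 2) * orbitDistInf T x 1 ≤ orbitDistInf T x (m + 2) := by
  obtain ⟨α, hα, hfirm⟩ := hF.exists_orbitDist_le x m
  set L := orbitDistInf T x 1
  set E : ℕ → ℝ := fun k => (orbitDist T x (m + 1) k - (m + 1) * L) + 2 * (orbitDist T x 1 k - L)
    + (orbitDist T x m (k + 1) - orbitDistInf T x m)
  have hE : Tendsto E atTop (𝓝 0) := by
    have h₁ := (tendsto_orbitDist hT x (m + 1)).sub_const ((m + 1) * L)
    have h₂ := ((tendsto_orbitDist hT x 1).sub_const L).const_mul 2
    have h₃ := ((tendsto_orbitDist hT x m).comp (tendsto_add_atTop_nat 1)).sub_const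
      (orbitDistInf T x m)
    simpa [E, hm, L] using (h₁.add h₂).add h₃
  -- `(m + 1) L` bounds `orbitDist (m + 1)` from below and, up to `E`, from above; with the
  -- excesses in `E` nonnegative and the coefficients at most one, firmness at
  -- `(Tᵏx, Tᵏ⁺ᵐ⁺¹x)` bounds the deficit of `orbitDist (m + 2) k` below `(m + 2) L` by `E k / α`.
  have hdeficit : ∀ k, α * ((m + 2) * L - orbitDist T x (m + 2) k) ≤ E k := by
    intro k
    obtain ⟨q, r, s, t, hq, hr, hs, hαt, hsum, hk⟩ := hfirm k
    have e₁ : (m + 1) * L ≤ orbitDist T x (m + 1) k := hm ▸ orbitDistInf_le x (m + 1) k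
    have e₁' : (m + 1) * L ≤ orbitDist T x (m + 1) (k + 1) := hm ▸ orbitDistInf_le x (m + 1) _
    have e₂ : L ≤ orbitDist T x 1 k := orbitDistInf_le x 1 k
    have e₂' : orbitDist T x 1 (k + (m + 1)) ≤ orbitDist T x 1 k :=
      orbitDist_antitone hT x 1 (Nat.le_add_right k _)
    have e₃ : orbitDistInf T x m ≤ orbitDist T x m (k + 1) := orbitDistInf_le x m _
    have e₃' : orbitDistInf T x m ≤ m * L := orbitDistInf_le_mul hT x m
    have hL : 0 ≤ L := orbitDistInf_nonneg x 1
    have hm0 : (0 : ℝ) ≤ m := m.cast_nonneg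
    have hE0 : 0 ≤ E k := by simp only [E]; linarith
    have ht : t * ((m + 2) * L - orbitDist T x (m + 2) k) ≤ E k := by
      have hmL : 0 ≤ (m + 1) * L := by positivity
      simp only [E]
      linarith [mul_nonneg hs (sub_nonneg.2 e₂'), mul_nonneg (hα.le.trans hαt) (sub_nonneg.2 e₃'),
        mul_nonneg (by linarith : 0 ≤ 1 - q - r - s - 2 * t) hmL,
        mul_nonneg (by linarith : 0 ≤ 1 - q) (sub_nonneg.2 e₁),
        mul_nonneg (by linarith : 0 ≤ 1 - r) (sub_nonneg.2 e₂),
        mul_nonneg (by linarith : 0 ≤ 1 - s) (sub_nonneg.2 e₂),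
        mul_nonneg (by linarith : 0 ≤ 1 - t) (sub_nonneg.2 e₃),
        mul_nonneg (mul_nonneg hr hm0) hL, mul_nonneg (mul_nonneg hs hm0) hL]
    rcases le_or_gt 0 ((m + 2) * L - orbitDist T x (m + 2) k) with hpos | hneg
    · exact (mul_le_mul_of_nonneg_right hαt hpos).trans ht
    · exact (mul_neg_of_pos_of_neg hα hneg).le.trans hE0
  have hlim : α * ((m + 2) * L - orbitDistInf T x (m + 2)) ≤ 0 :=
    le_of_tendsto_of_tendsto (((tendsto_orbitDist hT x (m + 2)).const_sub _).const_mul α) hE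
      (Eventually.of_forall hdeficit)
  linarith [nonpos_of_mul_nonpos_right hlim hα]

theorem IsFirm.orbitDistInf_eq_mul (hT : IsNonexpansive dist T) (hF : IsFirm dist T) (x : X) :
    ∀ m : ℕ, orbitDistInf T x m = m * orbitDistInf T x 1
  | 0 => by simp [orbitDistInf, orbitDist]
  | 1 => by simp
  | m + 2 => by
    have ih := hF.orbitDistInf_eq_mul hT x (m + 1)
    push_cast at ih ⊢
    exact le_antisymm (by exact_mod_cast orbitDistInf_le_mul hT x (m + 2))
      (hF.mul_le_orbitDistInf_add_two hT x ih)

theorem IsFirm.orbitDistInf_one_le (hT : IsNonexpansive dist T) (hF : IsFirm dist T) {x : X}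
    {ρ : ℝ} (hρ : Tendsto (fun n : ℕ => dist x (T^[n] x) / n) atTop (𝓝 ρ)) :
    orbitDistInf T x 1 ≤ ρ := by
  refine ge_of_tendsto hρ ?_
  filter_upwards [eventually_gt_atTop 0] with n hn
  rw [le_div_iff₀ (by exact_mod_cast hn), mul_comm]
  simpa [orbitDist] using (hF.orbitDistInf_eq_mul hT x n).ge.trans (orbitDistInf_le x n 0)

theorem dist_apply_iterate_succ_le (hT : IsNonexpansive dist T) (x y : X) (k : ℕ) :
    dist (T y) (T^[k + 1] x) ≤ dist y (T^[k + 1] x) + orbitDist T x 1 k := calc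
  dist (T y) (T^[k + 1] x) ≤ dist y (T^[k] x) := by
    rw [Function.iterate_succ_apply']; exact hT _ _
  _ ≤ dist y (T^[k + 1] x) + dist (T^[k + 1] x) (T^[k] x) := dist_triangle _ _ _
  _ = dist y (T^[k + 1] x) + orbitDist T x 1 k := by rw [dist_comm (T^[k + 1] x)]; rfl

theorem le_add_orbitDistInf_of_tendsto (hT : IsNonexpansive dist T) {x₀ : X} {n : ℕ → ℕ}
    (hn : Tendsto n atTop atTop) {h : X → ℝ}
    (hlim : ∀ y, Tendsto (fun i => dist y (T^[n i] x₀) - dist x₀ (T^[n i] x₀)) atTop (𝓝 (h y)))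
    (y : X) : h (T y) ≤ h y + orbitDistInf T x₀ 1 := by
  have hstep : Tendsto (fun i => orbitDist T x₀ 1 (n i - 1)) atTop (𝓝 (orbitDistInf T x₀ 1)) :=
    (tendsto_orbitDist hT x₀ 1).comp ((tendsto_sub_atTop_nat 1).comp hn)
  refine le_of_tendsto_of_tendsto (hlim (T y)) ((hlim y).add hstep) ?_
  filter_upwards [hn.eventually_gt_atTop 0] with i hi
  obtain ⟨k, hk⟩ : ∃ k, n i = k + 1 := ⟨n i - 1, by omega⟩
  simp only [hk, Nat.add_sub_cancel]
  linarith [dist_apply_iterate_succ_le hT x₀ y k]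

end

theorem stmt19 {X : Type*} [MetricSpace X] (x₀ : X) (T : X → X)
    (hT : IsNonexpansive (fun x y : X => dist x y) T)
    (hF : IsFirm (fun x y : X => dist x y) T)
    (ρ : ℝ)
    (hρ : Tendsto (fun n : ℕ => dist x₀ (T^[n] x₀) / n) atTop (nhds ρ))
    (h : X → ℝ) (n : ℕ → ℕ) (hn : StrictMono n)
    (hlim : ∀ x : X, Tendsto
      (fun i : ℕ => dist x (T^[n i] x₀) - dist x₀ (T^[n i] x₀)) atTop (nhds (h x))) :
    ∀ x : X, h (T x) ≤ h x + ρ := fun x =>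
  (le_add_orbitDistInf_of_tendsto hT hn.tendsto_atTop hlim x).trans
    (add_le_add_right (hF.orbitDistInf_one_le hT hρ) _)
end
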